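/- Let G be a graph, t a nontrivial term, and h : var(t) → V(G) a mapping. Then the following are equivalent: (i) the value h(t) computed in the graph algebra A(G) is not ∞; (ii) h(t) = h(L(t)); (iii) h is a graph homomorphism of the term graph G(t) into G. In particular, if the image of h induces a disconnected subgraph of G, then h is not a homomorphism and h(t) = ∞. -/

import Mathlib

/-!
By induction on `t`, the value `h(t)` is either `∞` or `h(L(t))`, and `h(t₁t₂) ≠ ∞` exactly
when `h(t₁) ≠ ∞`, `h(t₂) ≠ ∞` and `(h(L(t₁)), h(L(t₂)))` is an edge of `G`. Unfolding this
recursion, `h(t) = h(L(t))` says precisely that every edge of `G(t)` is mapped to an edge of `G`.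
For the last clause: in `G(t)` every variable is joined to `L(t)` by an undirected path, and a
homomorphism maps such paths to paths in the induced subgraph on its image.
-/

open Classical

/-- A graph `(V, E)`: an ambient type `U`, a set `verts ⊆ U` of vertices and an
edge relation `Edge ⊆ verts × verts`. -/
structure DGraph : Type 1 where
  U : Type
  verts : Set U
  Edge : U → U → Prop
  edge_mem : ∀ a b, Edge a b → a ∈ verts ∧ b ∈ verts

namespace DGraph

/-- The induced subgraph of `G` on a set `S`. -/
def induce (G : DGraph) (S : Set G.U) : DGraph where
  U := G.U
  verts := G.verts ∩ S
  Edge a b := G.Edge a b ∧ a ∈ S ∧ b ∈ S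
  edge_mem a b h := ⟨⟨(G.edge_mem a b h.1).1, h.2.1⟩, (G.edge_mem a b h.1).2, h.2.2⟩

/-- The set of vertices reachable from `a` by a directed walk (including `a` itself). -/
def reachSet (G : DGraph) (a : G.U) : Set G.U := {b | Relation.ReflTransGen G.Edge a b}

/-- The subgraph of `G` induced by the set of vertices reachable from `a`. -/
def reachSub (G : DGraph) (a : G.U) : DGraph := G.induce (G.reachSet a)

/-- A graph is undirected if its edge relation is symmetric. -/
def Undirected (G : DGraph) : Prop := ∀ a b, G.Edge a b → G.Edge b a

end DGraph

/-- A homomorphism of graphs: maps vertices to vertices and edges to edges. -/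
def IsHom (G H : DGraph) (f : G.U → H.U) : Prop :=
  (∀ a ∈ G.verts, f a ∈ H.verts) ∧ ∀ a b, G.Edge a b → H.Edge (f a) (f b)

/-- A strong homomorphism: additionally maps non-edges to non-edges. -/
def IsStrongHom (G H : DGraph) (f : G.U → H.U) : Prop :=
  IsHom G H f ∧ ∀ a ∈ G.verts, ∀ b ∈ G.verts, ¬ G.Edge a b → ¬ H.Edge (f a) (f b)

/-- Isomorphism of graphs. -/
def IsIsomorphic (G H : DGraph) : Prop :=
  ∃ f : G.U → H.U, Set.BijOn f G.verts H.verts ∧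
    ∀ a ∈ G.verts, ∀ b ∈ G.verts, (G.Edge a b ↔ H.Edge (f a) (f b))

/-- Terms of type (2,0) over a variable set `X`: variables, the constant `∞`,
and a binary operation (juxtaposition). -/
inductive GTerm (X : Type) : Type
  | var : X → GTerm X
  | inf : GTerm X
  | app : GTerm X → GTerm X → GTerm X

namespace GTerm

/-- The set of variables occurring in a term. -/
def vars {X : Type} : GTerm X → Set X
  | var x => {x}
  | inf => ∅
  | app t₁ t₂ => t₁.vars ∪ t₂.vars

/-- A term is nontrivial if it contains no occurrence of `∞`. -/
def Nontrivial {X : Type} : GTerm X → Prop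
  | var _ => True
  | inf => False
  | app t₁ t₂ => t₁.Nontrivial ∧ t₂.Nontrivial

/-- The leftmost variable of a term (`none` for the bare constant `∞` on the left). -/
def leftVar {X : Type} : GTerm X → Option X
  | var x => some x
  | inf => none
  | app t₁ _ => t₁.leftVar

/-- The edge set of the term graph `G(t)`. -/
def edges {X : Type} : GTerm X → Set (X × X)
  | var _ => ∅
  | inf => ∅
  | app t₁ t₂ =>
      t₁.edges ∪ t₂.edges ∪
        {p | ∃ x y, t₁.leftVar = some x ∧ t₂.leftVar = some y ∧ p = (x, y)}

theorem vars_finite {X : Type} (t : GTerm X) : t.vars.Finite := by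
  induction t with
  | var x => simpa [vars] using Set.finite_singleton x
  | inf => simpa [vars] using Set.finite_empty
  | app t₁ t₂ ih₁ ih₂ => simpa [vars] using ih₁.union ih₂

end GTerm

/-- The term graph `G(t)` of a term `t`: vertices are the variables of `t`. -/
def termGraph {X : Type} (t : GTerm X) : DGraph where
  U := X
  verts := t.vars
  Edge a b := (a, b) ∈ t.edges ∧ a ∈ t.vars ∧ b ∈ t.vars
  edge_mem a b h := ⟨h.2.1, h.2.2⟩

/-- Evaluation of a term in the graph algebra `A(G)`; `none` plays the role of `∞`:
`x · y = x` if `(x,y)` is an edge, and `∞` otherwise. -/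
noncomputable def DGraph.eval (G : DGraph) {X : Type} (h : X → Option G.U) :
    GTerm X → Option G.U
  | .var x => h x
  | .inf => none
  | .app t₁ t₂ =>
      match G.eval h t₁, G.eval h t₂ with
      | some a, some b => if G.Edge a b then some a else none
      | _, _ => none

/-- Identities: pairs of terms. -/
abbrev GId (X : Type) := GTerm X × GTerm X

/-- An assignment takes values in `V(G) ∪ {∞}`. -/
def DGraph.Assign (G : DGraph) {X : Type} (h : X → Option G.U) : Prop :=
  ∀ x a, h x = some a → a ∈ G.verts

/-- The assignment `h` makes the identity `e` true in `A(G)`. -/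
def DGraph.SatIdWith (G : DGraph) {X : Type} (h : X → Option G.U) (e : GId X) : Prop :=
  G.eval h e.1 = G.eval h e.2

/-- `G` satisfies the identity `e`. -/
def DGraph.SatId (G : DGraph) {X : Type} (e : GId X) : Prop :=
  ∀ h : X → Option G.U, G.Assign h → G.SatIdWith h e

/-- An implication (quasi-identity) over the standard countably infinite
variable set `ℕ`: a finite set of identities (the premise) and an identity
(the consequence). -/
structure Imp : Type where
  prem : Set (GId ℕ)
  concl : GId ℕ
  prem_fin : prem.Finite

/-- `G` satisfies the implication `imp`. -/
def DGraph.SatImp (G : DGraph) (imp : Imp) : Prop :=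
  ∀ h : ℕ → Option G.U, G.Assign h →
    (∀ e ∈ imp.prem, G.SatIdWith h e) → G.SatIdWith h imp.concl

/-- The implications satisfied by every member of a class `K` of graphs. -/
def qId (K : Set DGraph) : Set Imp := {imp | ∀ G ∈ K, G.SatImp imp}

/-- The class of graphs satisfying every implication of `Sg`. -/
def ModI (Sg : Set Imp) : Set DGraph := {G | ∀ imp ∈ Sg, G.SatImp imp}

/-- The finite members of `ModI Sg`. -/
def ModIf (Sg : Set Imp) : Set DGraph := {G | G ∈ ModI Sg ∧ G.verts.Finite}

/-- The pointed graph `G^⊥`: a new vertex `⊥ = none` with edges from `⊥` to all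
vertices, including a loop at `⊥`. -/
def DGraph.pointed (G : DGraph) : DGraph where
  U := Option G.U
  verts := insert none (some '' G.verts)
  Edge a b := b ∈ insert none (some '' G.verts) ∧
    (a = none ∨ ∃ u v, a = some u ∧ b = some v ∧ G.Edge u v)
  edge_mem a b h := by
    refine ⟨?_, h.1⟩
    rcases h.2 with rfl | ⟨u, v, rfl, rfl, huv⟩
    · exact Set.mem_insert _ _
    · exact Set.mem_insert_of_mem _ ⟨u, (G.edge_mem u v huv).1, rfl⟩

/-- Direct product of a family of graphs (componentwise edges). -/
def gProd {I : Type} (G : I → DGraph) : DGraph where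
  U := (i : I) → (G i).U
  verts := {a | ∀ i, a i ∈ (G i).verts}
  Edge a b := ∀ i, (G i).Edge (a i) (b i)
  edge_mem a b h :=
    ⟨fun i => ((G i).edge_mem _ _ (h i)).1, fun i => ((G i).edge_mem _ _ (h i)).2⟩

/-- The pointed product `∏ i, (G i)^⊥` of a family of graphs. -/
def pointedProd {I : Type} (G : I → DGraph) : DGraph := gProd fun i => (G i).pointed

/-- `W` is a strong pointed subproduct of the family `G`:
(1) `W` is an induced subgraph of the pointed product;
(2) every vertex has nonempty support;
(3) for every vertex `a` and every `k` in the support of `a`, the projection `p k`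
restricted to `reach_W(a)` is a strong homomorphism into `G k`. -/
def IsSPSofFam {I : Type} (G : I → DGraph) (W : DGraph) : Prop :=
  ∃ S : Set (pointedProd G).U,
    W = (pointedProd G).induce S ∧
    (∀ a ∈ ((pointedProd G).induce S).verts, ∃ i, a i ≠ none) ∧
    (∀ a ∈ ((pointedProd G).induce S).verts, ∀ k : I, a k ≠ none →
      (∀ b ∈ (((pointedProd G).induce S).reachSub a).verts, b k ≠ none) ∧
      (∀ b ∈ (((pointedProd G).induce S).reachSub a).verts,
        ∀ u, b k = some u → u ∈ (G k).verts) ∧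
      (∀ b ∈ (((pointedProd G).induce S).reachSub a).verts,
       ∀ c ∈ (((pointedProd G).induce S).reachSub a).verts,
        ∀ u v, b k = some u → c k = some v →
          ((((pointedProd G).induce S).reachSub a).Edge b c ↔ (G k).Edge u v)))

/-- The class of all strong pointed subproducts of families of members of `K`. -/
def Psps (K : Set DGraph) : Set DGraph :=
  {W | ∃ (I : Type) (G : I → DGraph), (∀ i, G i ∈ K) ∧ IsSPSofFam G W}

/-- The finite members of `Psps K`. -/
def PspsFin (K : Set DGraph) : Set DGraph := {W | W ∈ Psps K ∧ W.verts.Finite}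

/-- Isomorphic copies of members of a class of graphs. -/
def Icl (C : Set DGraph) : Set DGraph := {W | ∃ V ∈ C, IsIsomorphic V W}

/-- `W` is the union of a directed family of members of `C` (the members of the
family are induced subgraphs of a common member, pairwise). -/
def IsDirUnionOf (W : DGraph) (C : Set DGraph) : Prop :=
  ∃ (ι : Type) (V : ι → Set W.U) (E : ι → W.U → W.U → Prop)
    (hmem : ∀ i, ∀ a b, E i a b → a ∈ V i ∧ b ∈ V i),
    (∀ i, DGraph.mk W.U (V i) (E i) (hmem i) ∈ C) ∧
    (∀ i j, ∃ k,
      (V i ⊆ V k ∧ ∀ a b, E i a b ↔ E k a b ∧ a ∈ V i ∧ b ∈ V i) ∧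
      (V j ⊆ V k ∧ ∀ a b, E j a b ↔ E k a b ∧ a ∈ V j ∧ b ∈ V j)) ∧
    W.verts = ⋃ i, V i ∧
    ∀ a b, W.Edge a b ↔ ∃ i, E i a b

/-- The class of all directed unions of members of `C`. -/
def DCl (C : Set DGraph) : Set DGraph := {W | IsDirUnionOf W C}

/-- Condition (a) of Proposition `IPK-ab`. -/
def CondA (K : Set DGraph) (W : DGraph) : Prop :=
  ∀ a ∈ W.verts, ∃ Ga ∈ K, ∃ φ : W.U → Ga.U, IsStrongHom (W.reachSub a) Ga φ

/-- Condition (b) of Proposition `IPK-ab`. -/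
def CondB (K : Set DGraph) (W : DGraph) : Prop :=
  ∀ a ∈ W.verts, ∀ a' ∈ W.verts, a ≠ a' → W.reachSet a = W.reachSet a' →
    ∃ Gp ∈ K, ∃ φ : W.U → Gp.U, IsStrongHom (W.reachSub a) Gp φ ∧ φ a ≠ φ a'

/-- The identities `x_a x_b ≈ x_a` for edges `(a,b)` of `G` (variables are the
vertices of `G`). -/
def GammaE (G : DGraph) : Set (GId G.U) :=
  {e | ∃ a b, G.Edge a b ∧ e = (GTerm.app (GTerm.var a) (GTerm.var b), GTerm.var a)}

/-- The identities `x_a x_b ≈ ∞` for non-edges `(a,b)` of `G`. -/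
def GammaN (G : DGraph) : Set (GId G.U) :=
  {e | ∃ a b, a ∈ G.verts ∧ b ∈ G.verts ∧ ¬ G.Edge a b ∧
    e = (GTerm.app (GTerm.var a) (GTerm.var b), GTerm.inf)}

/-- `Σ(G) = Γ_e(G) ∪ Γ_n(G)`. -/
def SigmaIds (G : DGraph) : Set (GId G.U) := GammaE G ∪ GammaN G

theorem SigmaIds_finite (G : DGraph) (hfin : G.verts.Finite) : (SigmaIds G).Finite := by
  classical
  have hsub : SigmaIds G ⊆
      (fun p : G.U × G.U =>
        if G.Edge p.1 p.2 then
          (GTerm.app (GTerm.var p.1) (GTerm.var p.2), GTerm.var p.1)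
        else (GTerm.app (GTerm.var p.1) (GTerm.var p.2), GTerm.inf)) ''
        (G.verts ×ˢ G.verts) := by
    rintro e (⟨a, b, hab, rfl⟩ | ⟨a, b, ha, hb, hnab, rfl⟩)
    · exact ⟨(a, b), Set.mk_mem_prod (G.edge_mem a b hab).1 (G.edge_mem a b hab).2,
        by simp [hab]⟩
    · exact ⟨(a, b), Set.mk_mem_prod ha hb, by simp [hnab]⟩
  exact ((hfin.prod hfin).image _).subset hsub

/-- The subgraph of `G` induced on `S` is (weakly) connected. -/
def DGraph.ConnectedOn (G : DGraph) (S : Set G.U) : Prop :=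
  ∀ a ∈ (G.induce S).verts, ∀ b ∈ (G.induce S).verts,
    Relation.ReflTransGen (fun u v => (G.induce S).Edge u v ∨ (G.induce S).Edge v u) a b
namespace GTerm

variable {X : Type}

theorem leftVar_mem_vars {t : GTerm X} {x : X} (hx : t.leftVar = some x) : x ∈ t.vars := by
  induction t with
  | var y => cases hx; rfl
  | inf => cases hx
  | app t₁ _ ih₁ _ => exact Or.inl (ih₁ hx)

theorem Nontrivial.exists_leftVar_eq {t : GTerm X} (ht : t.Nontrivial) :
    ∃ x, t.leftVar = some x := by
  induction t with
  | var x => exact ⟨x, rfl⟩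
  | inf => exact ht.elim
  | app _ _ ih₁ _ => exact ih₁ ht.1

theorem mem_edges_app {t₁ t₂ : GTerm X} {a b : X} :
    (a, b) ∈ (app t₁ t₂).edges ↔
      (a, b) ∈ t₁.edges ∨ (a, b) ∈ t₂.edges ∨ (t₁.leftVar = some a ∧ t₂.leftVar = some b) := by
  simp [edges, or_assoc]

theorem mem_vars_of_mem_edges {t : GTerm X} {a b : X} (hab : (a, b) ∈ t.edges) :
    a ∈ t.vars ∧ b ∈ t.vars := by
  induction t with
  | var _ => exact hab.elim
  | inf => exact hab.elim
  | app _ _ ih₁ ih₂ =>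
    rcases mem_edges_app.1 hab with hab | hab | ⟨ha, hb⟩
    · exact (ih₁ hab).imp Or.inl Or.inl
    · exact (ih₂ hab).imp Or.inr Or.inr
    · exact ⟨Or.inl (leftVar_mem_vars ha), Or.inr (leftVar_mem_vars hb)⟩

end GTerm

open GTerm Relation

namespace DGraph

variable {X : Type}

theorem eval_app_eq_some (G : DGraph) (h : X → Option G.U) {t₁ t₂ : GTerm X} {a : G.U} :
    G.eval h (app t₁ t₂) = some a ↔
      ∃ b, G.eval h t₁ = some a ∧ G.eval h t₂ = some b ∧ G.Edge a b := by
  rw [eval]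
  rcases G.eval h t₁ with _ | u <;> rcases G.eval h t₂ with _ | v <;>
    simp only [reduceCtorEq, Option.some.injEq, false_and, and_false, exists_false]
  split_ifs with huv
  · simp only [Option.some.injEq]
    exact ⟨fun hua => ⟨v, hua, rfl, hua ▸ huv⟩, fun ⟨_, hua, _⟩ => hua⟩
  · simp only [false_iff]
    rintro ⟨_, rfl, rfl, huv'⟩
    exact huv huv'

theorem apply_leftVar_eq_of_eval_eq_some (G : DGraph) (h : X → Option G.U) {t : GTerm X}
    {x₀ : X} (hx₀ : t.leftVar = some x₀) {a : G.U} (ha : G.eval h t = some a) :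
    h x₀ = some a := by
  induction t generalizing a with
  | var y => cases hx₀; exact ha
  | inf => cases hx₀
  | app t₁ t₂ ih₁ _ =>
    obtain ⟨_, h₁, -, -⟩ := (G.eval_app_eq_some h).1 ha
    exact ih₁ hx₀ h₁

theorem eval_eq_some_leftVar_iff (G : DGraph) (h : X → G.U) {t : GTerm X}
    (ht : t.Nontrivial) {x₀ : X} (hx₀ : t.leftVar = some x₀) :
    G.eval (fun x => some (h x)) t = some (h x₀) ↔
      ∀ a b, (a, b) ∈ t.edges → G.Edge (h a) (h b) := by
  induction t generalizing x₀ with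
  | var y =>
    cases hx₀
    simp [eval, edges]
  | inf => exact ht.elim
  | app t₁ t₂ ih₁ ih₂ =>
    obtain ⟨y, hy⟩ := ht.2.exists_leftVar_eq
    calc G.eval (fun x => some (h x)) (app t₁ t₂) = some (h x₀)
        ↔ G.eval (fun x => some (h x)) t₁ = some (h x₀) ∧
          G.eval (fun x => some (h x)) t₂ = some (h y) ∧ G.Edge (h x₀) (h y) := by
          rw [eval_app_eq_some]
          constructor
          · rintro ⟨b, h₁, h₂, hb⟩
            cases Option.some_injective _ (G.apply_leftVar_eq_of_eval_eq_some _ hy h₂)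
            exact ⟨h₁, h₂, hb⟩
          · exact fun hs => ⟨_, hs⟩
      _ ↔ (∀ a b, (a, b) ∈ t₁.edges → G.Edge (h a) (h b)) ∧
          (∀ a b, (a, b) ∈ t₂.edges → G.Edge (h a) (h b)) ∧ G.Edge (h x₀) (h y) := by
          rw [ih₁ ht.1 hx₀, ih₂ ht.2 hy]
      _ ↔ ∀ a b, (a, b) ∈ (app t₁ t₂).edges → G.Edge (h a) (h b) := by
          have hx₀' : t₁.leftVar = some x₀ := hx₀
          simp [mem_edges_app, or_imp, forall_and, hx₀', hy]

def WeaklyConnected (G : DGraph) : Prop :=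
  ∀ a ∈ G.verts, ∀ b ∈ G.verts, ReflTransGen (SymmGen G.Edge) a b

end DGraph

theorem IsHom.connectedOn_image {G H : DGraph} {f : G.U → H.U} (hf : IsHom G H f)
    (hG : G.WeaklyConnected) : H.ConnectedOn (f '' G.verts) := by
  have step (u v : G.U) (huv : G.Edge u v) : (H.induce (f '' G.verts)).Edge (f u) (f v) :=
    ⟨hf.2 u v huv, Set.mem_image_of_mem f (G.edge_mem u v huv).1,
      Set.mem_image_of_mem f (G.edge_mem u v huv).2⟩
  rintro _ ⟨-, a, ha, rfl⟩ _ ⟨-, b, hb, rfl⟩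
  exact (hG a ha b hb).lift f fun u v => Or.imp (step u v) (step v u)

section TermGraph

variable {X : Type}

theorem termGraph_edge_iff {t : GTerm X} {a b : X} : (termGraph t).Edge a b ↔ (a, b) ∈ t.edges :=
  ⟨And.left, fun hab => ⟨hab, mem_vars_of_mem_edges hab⟩⟩

theorem isHom_termGraph_iff {G : DGraph} {t : GTerm X} {h : X → G.U}
    (hmap : ∀ x ∈ t.vars, h x ∈ G.verts) :
    IsHom (termGraph t) G h ↔ ∀ a b, (a, b) ∈ t.edges → G.Edge (h a) (h b) :=
  ⟨fun hh a b hab => hh.2 a b (termGraph_edge_iff.2 hab),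
    fun hE => ⟨hmap, fun a b hab => hE a b (termGraph_edge_iff.1 hab)⟩⟩

theorem reflTransGen_termGraph_leftVar {t : GTerm X} (ht : t.Nontrivial) {x₀ : X}
    (hx₀ : t.leftVar = some x₀) {a : X} (ha : a ∈ t.vars) :
    ReflTransGen (SymmGen (termGraph t).Edge) a x₀ := by
  induction t generalizing x₀ a with
  | var y =>
    cases hx₀
    cases ha
    rfl
  | inf => exact ht.elim
  | app t₁ t₂ ih₁ ih₂ =>
    obtain ⟨y, hy⟩ := ht.2.exists_leftVar_eq
    have lift {s : GTerm X} (hs : s.edges ⊆ (app t₁ t₂).edges) {u v : X} :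
        SymmGen (termGraph s).Edge u v → SymmGen (termGraph (app t₁ t₂)).Edge u v := by
      simp only [SymmGen, termGraph_edge_iff]
      exact Or.imp (@hs _) (@hs _)
    rcases ha with ha | ha
    · exact ReflTransGen.mono (fun u v => lift fun _ => Or.inl ∘ Or.inl) _ _ (ih₁ ht.1 hx₀ ha)
    · have hedge : (termGraph (app t₁ t₂)).Edge x₀ y :=
        termGraph_edge_iff.2 (mem_edges_app.2 (Or.inr (Or.inr ⟨hx₀, hy⟩)))
      exact (ReflTransGen.mono (fun u v => lift fun _ => Or.inl ∘ Or.inr) _ _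
        (ih₂ ht.2 hy ha)).tail (SymmGen.of_rel_symm hedge)

theorem termGraph_weaklyConnected {t : GTerm X} (ht : t.Nontrivial) :
    (termGraph t).WeaklyConnected := by
  obtain ⟨x₀, hx₀⟩ := ht.exists_leftVar_eq
  intro a ha b hb
  exact (reflTransGen_termGraph_leftVar ht hx₀ ha).trans
    (symm (reflTransGen_termGraph_leftVar ht hx₀ hb))

end TermGraph

/-- for a nontrivial term `t` and a mapping `h : var(t) → V(G)`,
the following are equivalent: (i) `h(t) ≠ ∞`; (ii) `h(t) = h(L(t))`;
(iii) `h` is a homomorphism of `G(t)` into `G`. In particular, if the image of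
`h` is not connected, then `h` is not a homomorphism and `h(t) = ∞`. -/
theorem statement_0 (G : DGraph) (X : Type) (t : GTerm X) (ht : t.Nontrivial)
    (h : X → G.U) (hmap : ∀ x ∈ t.vars, h x ∈ G.verts)
    (x0 : X) (hx0 : t.leftVar = some x0) :
    ((G.eval (fun x => some (h x)) t ≠ none ↔
        G.eval (fun x => some (h x)) t = some (h x0)) ∧
     (G.eval (fun x => some (h x)) t = some (h x0) ↔ IsHom (termGraph t) G h)) ∧
    (¬ G.ConnectedOn (h '' t.vars) →
      ¬ IsHom (termGraph t) G h ∧ G.eval (fun x => some (h x)) t = none) := by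
  have hleft : G.eval (fun x => some (h x)) t ≠ none ↔
      G.eval (fun x => some (h x)) t = some (h x0) := by
    refine ⟨fun hne => ?_, fun he => he ▸ Option.some_ne_none _⟩
    obtain ⟨a, ha⟩ := Option.ne_none_iff_exists'.1 hne
    rw [ha, G.apply_leftVar_eq_of_eval_eq_some _ hx0 ha]
  have hhom : G.eval (fun x => some (h x)) t = some (h x0) ↔ IsHom (termGraph t) G h :=
    (G.eval_eq_some_leftVar_iff h ht hx0).trans (isHom_termGraph_iff hmap).symm
  refine ⟨⟨hleft, hhom⟩, fun hdisc => ?_⟩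
  have hnot : ¬ IsHom (termGraph t) G h := fun hh =>
    hdisc (hh.connectedOn_image (termGraph_weaklyConnected ht))
  exact ⟨hnot, not_not.1 (mt (hleft.trans hhom).1 hnot)⟩
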